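/- arXiv:1501.06518 — 2 statements merged into one kernel-verified Lean document; each statement's English description precedes it below -/
import Mathlib

section
/- Let M be a finite matroid. If (T, f) is a depth-decomposition of M, then there exists a map f' from the ground set of M to the vertices of T such that (T, f') is a depth-decomposition of M and f'(e) is a leaf of T for every element e of the ground set of M. -/
/-!
Common definitions: rooted trees (encoded by a parent function), their depth,
depth-decompositions of matroids, matroid rank, circuits, contraction,
connectivity and components.
-/

/-- `u` is an ancestor of `v` (or equal to it) in the rooted tree encoded by `parent`. -/
def Anc {V : Type} (parent : V → V) (u v : V) : Prop := ∃ n : ℕ, parent^[n] v = u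

/-- `(root, parent)` encodes a rooted tree: the root is its own parent and every
vertex reaches the root by iterating `parent` (each non-root vertex is joined to its
parent by an edge). -/
def IsRootedTree {V : Type} (root : V) (parent : V → V) : Prop :=
  parent root = root ∧ ∀ v : V, ∃ n : ℕ, parent^[n] v = root

/-- The depth of a vertex in a rooted tree: the number of edges on the path from the
root to the vertex. -/
noncomputable def vdepth {V : Type} (root : V) (parent : V → V) (v : V) : ℕ :=
  sInf {n : ℕ | parent^[n] v = root}

/-- The depth of a rooted tree: the maximum number of edges on a path from the root
to a leaf, i.e. the maximal depth of a vertex. -/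
noncomputable def treeDepth {V : Type} (root : V) (parent : V → V) : ℕ :=
  sSup (Set.range (vdepth root parent))

/-- A leaf of a rooted tree: a vertex that is the parent of no other vertex. -/
def IsLeaf {V : Type} (parent : V → V) (v : V) : Prop := ∀ u : V, u ≠ v → parent u ≠ v

/-- The rank of a set `X` in a matroid `M`: the largest size of an independent subset
of `X`. -/
noncomputable def mrank {α : Type} (M : Matroid α) (X : Set α) : ℕ :=
  sSup {n : ℕ | ∃ I : Set α, I ⊆ X ∧ M.Indep I ∧ I.ncard = n}

/-- `(root, parent, f)` is a depth-decomposition of the matroid `M`: the tree is finite,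
the rank of `M` equals the number of edges of the tree (one edge per non-root vertex),
and the rank of any `X ⊆ M.E` is at most the number of edges of the union `T*(X)` of
the paths from the root to the vertices of `f(X)` (one edge per non-root vertex that is
an ancestor of, or equal to, some vertex of `f(X)`). -/
def IsDepthDecomp {α V : Type} (M : Matroid α) (root : V) (parent : V → V)
    (f : α → V) : Prop :=
  Finite V ∧ IsRootedTree root parent ∧
  mrank M M.E = Set.ncard {v : V | v ≠ root} ∧
  ∀ X : Set α, X ⊆ M.E →
    mrank M X ≤ Set.ncard {v : V | v ≠ root ∧ ∃ e ∈ X, Anc parent v (f e)}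

/-- `M` has a depth-decomposition of depth at most `d`. -/
def HasDepthDecompOfDepthLE {α : Type} (M : Matroid α) (d : ℕ) : Prop :=
  ∃ (V : Type) (root : V) (parent : V → V) (f : α → V),
    IsDepthDecomp M root parent f ∧ treeDepth root parent ≤ d

/-- The branch-depth of a matroid: the smallest depth of a depth-decomposition. -/
noncomputable def branchDepth {α : Type} (M : Matroid α) : ℕ :=
  sInf {d : ℕ | HasDepthDecompOfDepthLE M d}

/-- A circuit of a matroid: a minimal dependent set. -/
def IsCircuitOf {α : Type} (M : Matroid α) (C : Set α) : Prop :=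
  M.Dep C ∧ ∀ D : Set α, M.Dep D → D ⊆ C → D = C

/-- `N` is the contraction `M / F` of the matroid `M` by the set `F`: the ground set of
`N` is `M.E \ F`, and a set `I` disjoint from `F` is independent in `N` if and only if
`r(F ∪ I) = r(F) + |I|`. -/
def IsContractionBy {α : Type} (M : Matroid α) (F : Set α) (N : Matroid α) : Prop :=
  N.E = M.E \ F ∧
  ∀ I : Set α, N.Indep I ↔
    I ⊆ M.E \ F ∧ I.Finite ∧ mrank M (F ∪ I) = mrank M F + I.ncard

/-- A matroid is connected if its ground set is nonempty and any two distinct elements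
lie in a common circuit. -/
def IsConnectedM {α : Type} (M : Matroid α) : Prop :=
  M.E.Nonempty ∧
  ∀ x ∈ M.E, ∀ y ∈ M.E, x = y ∨ ∃ C : Set α, IsCircuitOf M C ∧ x ∈ C ∧ y ∈ C

/-- A component of a matroid: an equivalence class of the relation "equal or lying in a
common circuit" on the ground set. -/
def IsComponentOf {α : Type} (M : Matroid α) (K : Set α) : Prop :=
  ∃ x ∈ M.E,
    K = {y ∈ M.E | x = y ∨ ∃ C : Set α, IsCircuitOf M C ∧ x ∈ C ∧ y ∈ C}

/-!
Moving every element from `f e` down to a leaf below it only enlarges each union of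
root paths `T*(X)`, so the rank bound survives while the tree is unchanged. A leaf below
`v` exists because the tree is finite: take a descendant of `v` of maximal depth.
-/

section RootedTree

variable {V : Type} {root : V} {parent : V → V}

theorem Anc.trans {a b c : V} (hab : Anc parent a b) (hbc : Anc parent b c) :
    Anc parent a c := by
  obtain ⟨n, rfl⟩ := hab
  obtain ⟨m, rfl⟩ := hbc
  exact ⟨n + m, Function.iterate_add_apply parent n m c⟩

theorem Anc.of_parent_eq {u w : V} (h : parent w = u) : Anc parent u w := ⟨1, h⟩

theorem IsRootedTree.iterate_vdepth (hT : IsRootedTree root parent) (v : V) :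
    parent^[vdepth root parent v] v = root :=
  Nat.sInf_mem (hT.2 v)

theorem IsRootedTree.vdepth_lt_of_parent_eq (hT : IsRootedTree root parent) {u w : V}
    (huw : u ≠ w) (h : parent w = u) : vdepth root parent u < vdepth root parent w := by
  have hw : parent^[vdepth root parent w] w = root := hT.iterate_vdepth w
  obtain ⟨d, hd⟩ : ∃ d, vdepth root parent w = d + 1 := by
    refine Nat.exists_eq_add_one_of_ne_zero fun h0 => huw ?_
    rw [h0] at hw
    rw [← h, show w = root from hw, hT.1]
  rw [hd, Function.iterate_succ_apply, h] at hw
  exact hd ▸ Nat.lt_succ_of_le (Nat.sInf_le hw)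

theorem IsRootedTree.exists_leaf_anc [Finite V] (hT : IsRootedTree root parent) (v : V) :
    ∃ u, Anc parent v u ∧ IsLeaf parent u := by
  obtain ⟨u, hu, hmax⟩ := (Set.toFinite {u | Anc parent v u}).exists_maximalFor
    (vdepth root parent) _ ⟨v, 0, rfl⟩
  refine ⟨u, hu, fun w hwu hpw => ?_⟩
  have hlt := hT.vdepth_lt_of_parent_eq (Ne.symm hwu) hpw
  exact (hmax (hu.trans (Anc.of_parent_eq hpw)) hlt.le).not_gt hlt

end RootedTree

theorem IsDepthDecomp.of_anc {α V : Type} {M : Matroid α} {root : V} {parent : V → V}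
    {f g : α → V} (h : IsDepthDecomp M root parent f) (hfg : ∀ e, Anc parent (f e) (g e)) :
    IsDepthDecomp M root parent g := by
  obtain ⟨hV, hT, hrank, hX⟩ := h
  refine ⟨hV, hT, hrank, fun X hXE => (hX X hXE).trans (Set.ncard_le_ncard ?_)⟩
  rintro v ⟨hv, e, he, hve⟩
  exact ⟨hv, e, he, hve.trans (hfg e)⟩

theorem depthDecomp_exists_leaf_map_general {α V : Type} (M : Matroid α)
    (root : V) (parent : V → V) (f : α → V)
    (h : IsDepthDecomp M root parent f) :
    ∃ f' : α → V, IsDepthDecomp M root parent f' ∧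
      ∀ e ∈ M.E, IsLeaf parent (f' e) := by
  have : Finite V := h.1
  choose leaf hleaf using h.2.1.exists_leaf_anc
  exact ⟨leaf ∘ f, h.of_anc fun e => (hleaf (f e)).1, fun e _ => (hleaf (f e)).2⟩

/-- If `(T, f)` is a depth-decomposition of a finite matroid `M`, then
there is a map `f'` such that `(T, f')` is a depth-decomposition of `M` and `f'(e)` is a
leaf of `T` for every element `e` of the ground set of `M`. -/
theorem depthDecomp_exists_leaf_map {α V : Type} (M : Matroid α) [M.Finite]
    (root : V) (parent : V → V) (f : α → V)
    (h : IsDepthDecomp M root parent f) :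
    ∃ f' : α → V, IsDepthDecomp M root parent f' ∧
      ∀ e ∈ M.E, IsLeaf parent (f' e) :=
  depthDecomp_exists_leaf_map_general M root parent f h
end

section
/- Let M be a finite connected matroid and e an element of M such that the contraction M/e is disconnected. Then for every component K of M/e, there exists a circuit C of M containing e such that C ⊆ K ∪ {e}. -/
/-!
Pick `x ∈ K`, so `x ≠ e`. Connectivity of `M` gives a circuit `C` of `M` through `x` and `e`;
removing `e` from it yields a circuit `C \ {e}` of `M ／ e` through `x`, which therefore lies in
the component `K`.
-/

open Set Matroid

section

variable {α : Type} {M : Matroid α}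

lemma isCircuitOf_iff_isCircuit {C : Set α} : IsCircuitOf M C ↔ M.IsCircuit C := by
  rw [isCircuit_iff]
  rfl

lemma cast_mrank_eq_eRk [M.RankFinite] (X : Set α) : (mrank M X : ℕ∞) = M.eRk X := by
  obtain ⟨I, hI⟩ := M.exists_isBasis' X
  have hIfin : I.Finite := hI.indep.finite
  suffices mrank M X = I.ncard by rw [this, hIfin.cast_ncard_eq, hI.encard_eq_eRk]
  refine IsGreatest.csSup_eq ⟨⟨I, hI.subset, hI.indep, rfl⟩, ?_⟩
  rintro _ ⟨J, hJX, hJ, rfl⟩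
  rw [← Nat.cast_le (α := ℕ∞), hJ.finite.cast_ncard_eq, hIfin.cast_ncard_eq, hI.encard_eq_eRk]
  exact hJ.encard_le_eRk_of_subset hJX

lemma Matroid.contract_indep_iff_eRk_union [M.RankFinite] {F I : Set α} (hFI : Disjoint F I) :
    (M ／ F).Indep I ↔ I.Finite ∧ M.eRk (F ∪ I) = M.eRk F + I.encard := by
  obtain ⟨J, hJ⟩ := M.exists_isBasis' F
  rw [hJ.contract_indep_iff, and_iff_left hFI, ← hJ.eRk_eq_eRk_union, hJ.eRk_eq_encard,
    ← encard_union_eq (hFI.mono_left hJ.subset), union_comm, ← indep_iff_eRk_eq_encard]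
  exact ⟨fun h ↦ ⟨h.finite.subset subset_union_right, h⟩, And.right⟩

lemma IsContractionBy.eq_contract [M.RankFinite] {F : Set α} {N : Matroid α}
    (h : IsContractionBy M F N) : N = M ／ F := by
  refine ext_indep (by rw [h.1, contract_ground]) fun I hI ↦ ?_
  rw [h.1] at hI
  rw [h.2, and_iff_right hI, contract_indep_iff_eRk_union (subset_sdiff.1 hI).2.symm]
  refine and_congr_right fun hIfin ↦ ?_
  rw [← hIfin.cast_ncard_eq, ← cast_mrank_eq_eRk, ← cast_mrank_eq_eRk]
  norm_cast

lemma subset_component_of_isCircuitOf {x : α} {D : Set α} (hD : IsCircuitOf M D) (hxD : x ∈ D) :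
    D ⊆ {y ∈ M.E | x = y ∨ ∃ C : Set α, IsCircuitOf M C ∧ x ∈ C ∧ y ∈ C} :=
  fun _ hy ↦ ⟨hD.1.subset_ground hy, Or.inr ⟨D, hD, hxD, hy⟩⟩

end

theorem exists_circuit_in_component_of_contract_disconnected_general {α : Type}
    (M : Matroid α) [M.Finite] (hM : IsConnectedM M)
    (e : α) (he : e ∈ M.E) (N : Matroid α) (hN : IsContractionBy M {e} N)
    (K : Set α) (hK : IsComponentOf N K) :
    ∃ C : Set α, IsCircuitOf M C ∧ e ∈ C ∧ C ⊆ K ∪ {e} := by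
  obtain ⟨x, hxN, rfl⟩ := hK
  obtain ⟨hxM, hxe⟩ : x ∈ M.E ∧ x ≠ e := by simpa [hN.1] using hxN
  obtain ⟨C, hC, hxC, heC⟩ := (hM.2 x hxM e he).resolve_left hxe
  have hCN : IsCircuitOf N (C \ {e}) := by
    rw [isCircuitOf_iff_isCircuit, hN.eq_contract]
    exact (isCircuitOf_iff_isCircuit.1 hC).contractElem_isCircuit ⟨x, hxC, e, heC, hxe⟩ heC
  refine ⟨C, hC, heC, fun y hyC ↦ ?_⟩
  obtain rfl | hye := eq_or_ne y e
  · exact Or.inr rfl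
  · exact Or.inl (subset_component_of_isCircuitOf hCN ⟨hxC, hxe⟩ ⟨hyC, hye⟩)

/-- Let `M` be a finite connected matroid and `e` an element of `M`
such that the contraction `M / e` is disconnected. Then for every component `K` of
`M / e` there is a circuit `C` of `M` with `e ∈ C` and `C ⊆ K ∪ {e}`. -/
theorem exists_circuit_in_component_of_contract_disconnected {α : Type}
    (M : Matroid α) [M.Finite] (hM : IsConnectedM M)
    (e : α) (he : e ∈ M.E) (N : Matroid α) (hN : IsContractionBy M {e} N)
    (hdis : ¬ IsConnectedM N)
    (K : Set α) (hK : IsComponentOf N K) :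
    ∃ C : Set α, IsCircuitOf M C ∧ e ∈ C ∧ C ⊆ K ∪ {e} :=
  exists_circuit_in_component_of_contract_disconnected_general M hM e he N hN K hK
end
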